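/- Assume condition (6) holds. Then 𝔏_Λ contains no non-trivial idempotents: if E ∈ 𝔏_Λ satisfies E² = E, then E = 0 or E = I. -/

import Mathlib

/-!
Every operator `A` in `𝔏_Λ` has the matrix shape of a formal Fourier series `∑ a_v T_v`,
where the monomial `T_v` sends `ξ_w` to `W(w,v) ξ_{vw}`: the coefficient `⟨A ξ_w, ξ_u⟩`
vanishes unless `u = vw`, and `W(e,v) ⟨A ξ_w, ξ_{vw}⟩ = W(w,v) ⟨A ξ_e, ξ_v⟩`. These are
WOT-closed linear conditions satisfied by the monomials, hence by all of `𝔏_Λ`, and since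
`W(e,v) > 0` such an operator is determined by `A ξ_e`.

For an idempotent `E` of this shape, expanding `⟨E (E ξ_e), ξ_v⟩` in the coordinates of
`E ξ_e` shows that `a = ⟨E ξ_e, ξ_e⟩` satisfies `a² = a`, and, when `a = 0`, that
`⟨E ξ_e, ξ_v⟩ = 0` by induction on the length of `v`; so `E = 0`. When `a = 1`, the same
applies to `I - E`.
-/

noncomputable section

/-- Auxiliary recursion for the weight function: `W(u, []) = 1` and, reading the word
`w = i_k ⋯ i_1` as the list `[i_k, …, i_1]`,
`W(u, i :: w) = λ_{i, w·u} · W(u, w)`, so that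
`W(u, i_k⋯i_1) = λ_{i_1,u} · λ_{i_2, i_1 u} ⋯ λ_{i_k, i_{k-1}⋯i_1 u}`. -/
def Waux {n : ℕ} (lam : Fin n → FreeMonoid (Fin n) → ℝ) (u : FreeMonoid (Fin n)) :
    List (Fin n) → ℝ
  | [] => 1
  | i :: w => lam i (FreeMonoid.ofList w * u) * Waux lam u w

/-- The weight function `W : F_n^+ × F_n^+ → ℝ` associated to the weights `λ_{i,w}`. -/
def Wfun {n : ℕ} (lam : Fin n → FreeMonoid (Fin n) → ℝ) (u w : FreeMonoid (Fin n)) : ℝ :=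
  Waux lam u (FreeMonoid.toList w)

instance {n : ℕ} : DecidableEq (FreeMonoid (Fin n)) := Classical.decEq _

/-- `n`-variable Fock space `H_n = ℓ²(F_n^+)`. -/
abbrev Hn (n : ℕ) : Type := lp (fun _ : FreeMonoid (Fin n) => ℂ) 2

/-- The standard orthonormal basis vector `ξ_w` of `H_n`. -/
def xi {n : ℕ} (w : FreeMonoid (Fin n)) : Hn n := lp.single 2 w 1

/-- The unital WOT-closed algebra generated by a tuple of bounded operators on `H_n`:
the closure, in the weak operator topology, of the unital subalgebra they generate. -/
def wotAlg {n : ℕ} (T : Fin n → (Hn n →L[ℂ] Hn n)) : Set (Hn n →L[ℂ] Hn n) :=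
  (ContinuousLinearMapWOT.ofCLM : (Hn n →L[ℂ] Hn n) → (Hn n →WOT[ℂ] Hn n)) ⁻¹'
    (closure ((ContinuousLinearMapWOT.ofCLM : (Hn n →L[ℂ] Hn n) → (Hn n →WOT[ℂ] Hn n)) ''
      (Algebra.adjoin ℂ (Set.range T) : Subalgebra ℂ (Hn n →L[ℂ] Hn n))))

lemma FreeMonoid.eq_one_of_mul_eq_one_right {α : Type*} {v x : FreeMonoid α} (h : v * x = 1) :
    x = 1 := by
  have := congrArg FreeMonoid.length h
  rw [FreeMonoid.length_mul, FreeMonoid.length_one] at this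
  exact FreeMonoid.length_eq_zero.mp (by omega)

section

variable {n : ℕ} {lam : Fin n → FreeMonoid (Fin n) → ℝ} {T : Fin n → (Hn n →L[ℂ] Hn n)}

@[simp] lemma Wfun_one_right (u : FreeMonoid (Fin n)) : Wfun lam u 1 = 1 := rfl

lemma Wfun_of (u : FreeMonoid (Fin n)) (i : Fin n) : Wfun lam u (FreeMonoid.of i) = lam i u := by
  simp [Wfun, Waux]

lemma Waux_append (u : FreeMonoid (Fin n)) :
    ∀ a b : List (Fin n), Waux lam u (a ++ b) = Waux lam (FreeMonoid.ofList b * u) a * Waux lam u b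
  | [], b => by simp [Waux]
  | i :: a, b => by
    simp only [List.cons_append, Waux, Waux_append u a b, FreeMonoid.ofList_append, mul_assoc]

lemma Wfun_mul (u a b : FreeMonoid (Fin n)) :
    Wfun lam u (a * b) = Wfun lam (b * u) a * Wfun lam u b :=
  Waux_append u a.toList b.toList

lemma Wfun_pos (hpos : ∀ i w, 0 < lam i w) (u w : FreeMonoid (Fin n)) : 0 < Wfun lam u w := by
  induction w using FreeMonoid.inductionOn' with
  | one => simp
  | of_mul i w ih => rw [Wfun_mul, Wfun_of]; exact mul_pos (hpos _ _) ih

lemma xi_apply (w u : FreeMonoid (Fin n)) : xi w u = if u = w then 1 else 0 := by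
  simp [xi, lp.single_apply, Pi.single_apply]

def analyticToeplitz (lam : Fin n → FreeMonoid (Fin n) → ℝ) :
    Submodule ℂ (Hn n →L[ℂ] Hn n) where
  carrier := {A | (∀ v w, (Wfun lam 1 v : ℂ) * A (xi w) (v * w) = Wfun lam w v * A (xi 1) v) ∧
    ∀ w u, (∀ v, v * w ≠ u) → A (xi w) u = 0}
  zero_mem' := by simp
  add_mem' {A B} hA hB := by
    refine ⟨fun v w => ?_, fun w u h => ?_⟩
    · simp only [add_apply, lp.coeFn_add, Pi.add_apply, mul_add, hA.1, hB.1]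
    · simp [hA.2 w u h, hB.2 w u h]
  smul_mem' c A hA := by
    refine ⟨fun v w => ?_, fun w u h => ?_⟩
    · simp only [smul_apply, lp.coeFn_smul, Pi.smul_apply, smul_eq_mul]
      linear_combination c * hA.1 v w
    · simp [hA.2 w u h]

variable {A E : Hn n →L[ℂ] Hn n}

lemma apply_xi_mul_of_mem_analyticToeplitz (hA : A ∈ analyticToeplitz lam)
    (v w : FreeMonoid (Fin n)) :
    (Wfun lam 1 v : ℂ) * A (xi w) (v * w) = Wfun lam w v * A (xi 1) v :=
  hA.1 v w

lemma apply_xi_eq_zero_of_mem_analyticToeplitz (hA : A ∈ analyticToeplitz lam)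
    {w u : FreeMonoid (Fin n)} (h : ∀ v, v * w ≠ u) : A (xi w) u = 0 :=
  hA.2 w u h

lemma mem_analyticToeplitz_of_apply_xi {α : FreeMonoid (Fin n)}
    (hA : ∀ w, A (xi w) = (Wfun lam w α : ℂ) • xi (α * w)) : A ∈ analyticToeplitz lam := by
  refine ⟨fun v w => ?_, fun w u h => ?_⟩
  · simp only [hA, lp.coeFn_smul, Pi.smul_apply, smul_eq_mul, xi_apply, mul_left_inj]
    split_ifs <;> simp_all [mul_comm]
  · rw [hA, lp.coeFn_smul, Pi.smul_apply, xi_apply, if_neg (h α).symm, smul_zero]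

lemma exists_apply_xi_of_mem_closure
    (hT : ∀ i w, T i (xi w) = (lam i w : ℂ) • xi (FreeMonoid.of i * w))
    (hA : A ∈ Submonoid.closure (Set.range T)) :
    ∃ α, ∀ w, A (xi w) = (Wfun lam w α : ℂ) • xi (α * w) := by
  induction hA using Submonoid.closure_induction with
  | mem _ h =>
    obtain ⟨i, rfl⟩ := h
    exact ⟨FreeMonoid.of i, fun w => by rw [hT, Wfun_of]⟩
  | one => exact ⟨1, fun w => by simp⟩
  | mul A B _ _ hA hB =>
    obtain ⟨α, hα⟩ := hA
    obtain ⟨β, hβ⟩ := hB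
    refine ⟨α * β, fun w => ?_⟩
    rw [mul_apply_eq_comp, hβ, map_smul, hα, smul_smul, Wfun_mul, mul_assoc]
    push_cast
    ring_nf

lemma adjoin_le_analyticToeplitz
    (hT : ∀ i w, T i (xi w) = (lam i w : ℂ) • xi (FreeMonoid.of i * w)) :
    Subalgebra.toSubmodule (Algebra.adjoin ℂ (Set.range T)) ≤ analyticToeplitz lam := by
  rw [Algebra.adjoin_eq_span, Submodule.span_le]
  intro A hA
  obtain ⟨α, hα⟩ := exists_apply_xi_of_mem_closure hT hA
  exact mem_analyticToeplitz_of_apply_xi hα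

lemma isClosed_ofCLM_image_analyticToeplitz :
    IsClosed (ContinuousLinearMapWOT.ofCLM '' (analyticToeplitz lam : Set (Hn n →L[ℂ] Hn n))) := by
  have hcoord (w u : FreeMonoid (Fin n)) :
      Continuous fun A : Hn n →WOT[ℂ] Hn n => A (xi w) u :=
    ContinuousLinearMapWOT.continuous_dual_apply (xi w) (lp.evalCLM ℂ (fun _ => ℂ) 2 u)
  have hset : ContinuousLinearMapWOT.ofCLM '' (analyticToeplitz lam : Set (Hn n →L[ℂ] Hn n)) =
      {A : Hn n →WOT[ℂ] Hn n |
        (∀ v w, (Wfun lam 1 v : ℂ) * A (xi w) (v * w) = Wfun lam w v * A (xi 1) v) ∧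
          ∀ w u, (∀ v, v * w ≠ u) → A (xi w) u = 0} := by
    ext A
    exact ⟨fun ⟨B, hB, hBA⟩ => hBA ▸ hB, fun hA => ⟨A.toCLM, hA, rfl⟩⟩
  rw [hset, Set.ofPred_and]
  refine .inter ?_ ?_
  · simp only [Set.ofPred_forall]
    exact isClosed_iInter fun v => isClosed_iInter fun w =>
      isClosed_eq (continuous_const.mul (hcoord _ _)) (continuous_const.mul (hcoord _ _))
  · simp only [Set.ofPred_forall]
    exact isClosed_iInter fun w => isClosed_iInter fun u =>
      isClosed_iInter fun _ => isClosed_eq (hcoord _ _) continuous_const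

lemma wotAlg_subset_analyticToeplitz
    (hT : ∀ i w, T i (xi w) = (lam i w : ℂ) • xi (FreeMonoid.of i * w)) :
    wotAlg T ⊆ analyticToeplitz lam := fun E hE => by
  obtain ⟨E', hE', hEE'⟩ := closure_minimal (Set.image_mono (adjoin_le_analyticToeplitz hT))
    isClosed_ofCLM_image_analyticToeplitz hE
  rwa [ContinuousLinearMapWOT.ofCLM_injective hEE'] at hE'

lemma hasSum_apply_xi_apply (A : Hn n →L[ℂ] Hn n) (f : Hn n) (u : FreeMonoid (Fin n)) :
    HasSum (fun x => f x * A (xi x) u) (A f u) := by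
  refine ((lp.hasSum_single ENNReal.ofNat_ne_top f).mapL
    ((lp.evalCLM ℂ (fun _ => ℂ) 2 u).comp A)).congr_fun fun x => ?_
  have hsingle : lp.single 2 x (f x) = f x • xi x := by
    rw [xi, ← lp.single_smul, smul_eq_mul, mul_one]
  rw [hsingle, ContinuousLinearMap.comp_apply, map_smul, map_smul]
  rfl

lemma eq_zero_of_apply_xi_eq_zero (h : ∀ w, A (xi w) = 0) : A = 0 := by
  refine lp.ext_continuousLinearMap ENNReal.ofNat_ne_top fun w => ?_
  ext1
  simpa [xi] using h w

lemma apply_xi_apply_one_of_mem_analyticToeplitz (hA : A ∈ analyticToeplitz lam)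
    {x : FreeMonoid (Fin n)} (hx : x ≠ 1) : A (xi x) 1 = 0 :=
  apply_xi_eq_zero_of_mem_analyticToeplitz hA fun _ h =>
    hx (FreeMonoid.eq_one_of_mul_eq_one_right h)

lemma apply_xi_apply_self_of_mem_analyticToeplitz (hA : A ∈ analyticToeplitz lam)
    (v : FreeMonoid (Fin n)) : A (xi v) v = A (xi 1) 1 := by
  simpa using apply_xi_mul_of_mem_analyticToeplitz hA 1 v

lemma isIdempotentElem_apply_xi_one_apply_one (hE : E ∈ analyticToeplitz lam)
    (hidem : IsIdempotentElem E) : IsIdempotentElem (E (xi 1) 1) := by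
  have hsum := hasSum_apply_xi_apply E (E (xi 1)) 1
  rw [← mul_apply_eq_comp, hidem] at hsum
  exact (hsum.unique (hasSum_single 1 fun x hx => by
    rw [apply_xi_apply_one_of_mem_analyticToeplitz hE hx, mul_zero])).symm

lemma eq_zero_of_apply_xi_one_eq_zero (hpos : ∀ i w, 0 < lam i w)
    (hA : A ∈ analyticToeplitz lam) (h : A (xi 1) = 0) : A = 0 := by
  refine eq_zero_of_apply_xi_eq_zero fun w => lp.ext (funext fun u => ?_)
  by_cases hu : ∃ v, v * w = u
  · obtain ⟨v, rfl⟩ := hu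
    have := apply_xi_mul_of_mem_analyticToeplitz hA v w
    rw [h] at this
    simpa [(Wfun_pos hpos 1 v).ne'] using this
  · exact apply_xi_eq_zero_of_mem_analyticToeplitz hA (not_exists.mp hu)

lemma apply_xi_one_eq_zero_of_isIdempotentElem (hE : E ∈ analyticToeplitz lam)
    (hidem : IsIdempotentElem E) (h0 : E (xi 1) 1 = 0) : E (xi 1) = 0 := by
  suffices ∀ k (v : FreeMonoid (Fin n)), v.length = k → E (xi 1) v = 0 from
    lp.ext (funext fun v => this _ v rfl)
  intro k
  induction k using Nat.strong_induction_on with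
  | _ k ih =>
  intro v hv
  have hterm : ∀ x, E (xi 1) x * E (xi x) v = 0 := by
    intro x
    rcases lt_or_ge x.length k with hlt | hge
    · rw [ih _ hlt x rfl, zero_mul]
    by_cases hx : ∃ q, q * x = v
    · obtain ⟨q, rfl⟩ := hx
      have hq : q = 1 := by
        rw [FreeMonoid.length_mul] at hv
        exact FreeMonoid.length_eq_zero.mp (by omega)
      rw [hq, one_mul, apply_xi_apply_self_of_mem_analyticToeplitz hE, h0, mul_zero]
    · rw [apply_xi_eq_zero_of_mem_analyticToeplitz hE (not_exists.mp hx), mul_zero]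
  have hsum := hasSum_apply_xi_apply E (E (xi 1)) v
  rw [← mul_apply_eq_comp, hidem] at hsum
  exact hsum.unique (by simp only [hterm]; exact hasSum_zero)

lemma eq_zero_of_isIdempotentElem_of_mem_analyticToeplitz (hpos : ∀ i w, 0 < lam i w)
    (hE : E ∈ analyticToeplitz lam) (hidem : IsIdempotentElem E) (h0 : E (xi 1) 1 = 0) :
    E = 0 :=
  eq_zero_of_apply_xi_one_eq_zero hpos hE (apply_xi_one_eq_zero_of_isIdempotentElem hE hidem h0)

end

theorem LLambda_no_nontrivial_idempotents_general (n : ℕ)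
    (lam : Fin n → FreeMonoid (Fin n) → ℝ)
    (hpos : ∀ i w, 0 < lam i w)
    (T : Fin n → (Hn n →L[ℂ] Hn n))
    (hT : ∀ i w, T i (xi w) = (lam i w : ℂ) • xi (FreeMonoid.of i * w))
    (E : Hn n →L[ℂ] Hn n) (hE : E ∈ wotAlg T) (hidem : E * E = E) :
    E = 0 ∨ E = 1 := by
  have hE' : E ∈ analyticToeplitz lam := wotAlg_subset_analyticToeplitz hT hE
  have hone : 1 ∈ analyticToeplitz lam := adjoin_le_analyticToeplitz hT (Subalgebra.one_mem _)
  rcases IsIdempotentElem.iff_eq_zero_or_one.mp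
    (isIdempotentElem_apply_xi_one_apply_one hE' hidem) with h0 | h1
  · exact .inl (eq_zero_of_isIdempotentElem_of_mem_analyticToeplitz hpos hE' hidem h0)
  · have h1E0 : (1 - E) (xi 1) 1 = 0 := by simp [xi_apply, h1]
    have h1E := eq_zero_of_isIdempotentElem_of_mem_analyticToeplitz hpos (sub_mem hone hE')
      (IsIdempotentElem.one_sub hidem) h1E0
    exact .inr (sub_eq_zero.mp h1E).symm

/-- Assume condition (6) holds. Then `𝔏_Λ` contains no non-trivial
idempotents: if `E ∈ 𝔏_Λ` satisfies `E² = E`, then `E = 0` or `E = I`. -/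
theorem LLambda_no_nontrivial_idempotents (n : ℕ) (hn : 2 ≤ n)
    (lam : Fin n → FreeMonoid (Fin n) → ℝ)
    (hpos : ∀ i w, 0 < lam i w) (hbdd : ∃ C : ℝ, ∀ i w, lam i w ≤ C)
    (h6 : ∃ C : ℝ, ∀ i w, Wfun lam (FreeMonoid.of i) w * (Wfun lam 1 w)⁻¹ ≤ C)
    (T : Fin n → (Hn n →L[ℂ] Hn n))
    (hT : ∀ i w, T i (xi w) = (lam i w : ℂ) • xi (FreeMonoid.of i * w))
    (E : Hn n →L[ℂ] Hn n) (hE : E ∈ wotAlg T) (hidem : E * E = E) :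
    E = 0 ∨ E = 1 :=
  LLambda_no_nontrivial_idempotents_general n lam hpos T hT E hE hidem
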